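/- Let U be an incoherent unitary on ℂ^{d₁} ⊗ ℂ^{d₂} (with respect to the product computational basis) and let x be a computational basis index of ℂ^{d₂}. Then the linear map E^x(ρ) = Tr₂((1_{d₁} ⊗ |x⟩⟨x|) U ρ U†) commutes with dephasing: E^x(Δ(ρ)) = Δ(E^x(ρ)) for every matrix ρ on ℂ^{d₁} ⊗ ℂ^{d₂}. -/

import Mathlib

open Matrix Complex
open scoped Kronecker Classical ComplexOrder

noncomputable section

/-- A matrix is *incoherent* (w.r.t. the computational basis) if it has the form
`Σ_x e^{iθ_x} |π(x)⟩⟨x|` for a permutation `π` and real phases `θ`. -/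
def IsIncoherent {d : Type*} [Fintype d] [DecidableEq d] (U : Matrix d d ℂ) : Prop :=
  ∃ (π : Equiv.Perm d) (θ : d → ℝ),
    U = Matrix.of fun i j => if i = π j then Complex.exp ((θ j : ℂ) * Complex.I) else 0

/-- The dephasing map `Δ`, zeroing all off-diagonal entries. -/
def dephase {d : Type*} [DecidableEq d] (ρ : Matrix d d ℂ) : Matrix d d ℂ :=
  Matrix.of fun i j => if i = j then ρ i j else 0

/-- Partial trace over the second tensor factor. -/
def ptrace2 {α β : Type*} [Fintype β] (A : Matrix (α × β) (α × β) ℂ) : Matrix α α ℂ :=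
  Matrix.of fun i i' => ∑ j, A (i, j) (i', j)

/-- Partial trace over the first tensor factor. -/
def ptrace1 {α β : Type*} [Fintype α] (A : Matrix (α × β) (α × β) ℂ) : Matrix β β ℂ :=
  Matrix.of fun j j' => ∑ i, A (i, j) (i, j')

/-- A quantum state: positive semidefinite matrix of trace one. -/
def IsState {d : Type*} [Fintype d] (ρ : Matrix d d ℂ) : Prop :=
  ρ.PosSemidef ∧ ρ.trace = 1

/-- The Choi matrix of a linear map between matrix algebras. -/
def choiMatrix {a b : Type*} [Fintype a] [DecidableEq a] [Fintype b]
    (E : Matrix a a ℂ →ₗ[ℂ] Matrix b b ℂ) : Matrix (a × b) (a × b) ℂ :=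
  Matrix.of fun p q => E (Matrix.single p.1 q.1 1) p.2 q.2

/-- A quantum channel: completely positive (PSD Choi matrix) trace-preserving linear map. -/
def IsChannel {a b : Type*} [Fintype a] [DecidableEq a] [Fintype b] [DecidableEq b]
    (E : Matrix a a ℂ →ₗ[ℂ] Matrix b b ℂ) : Prop :=
  (choiMatrix E).PosSemidef ∧ ∀ ρ, (E ρ).trace = ρ.trace

/-- The trace norm `‖M‖₁ = Tr √(M†M)`. -/
def traceNorm {d : Type*} [Fintype d] [DecidableEq d] (M : Matrix d d ℂ) : ℝ :=
  ((let hA := Matrix.posSemidef_conjTranspose_mul_self M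
    hA.1.eigenvectorUnitary.1 * diagonal (((↑) : ℝ → ℂ) ∘ Real.sqrt ∘ hA.1.eigenvalues) *
      (star hA.1.eigenvectorUnitary : Matrix d d ℂ)).trace).re

/-- The trace distance `D(ρ,σ) = ½‖ρ−σ‖₁`. -/
def traceDist {d : Type*} [Fintype d] [DecidableEq d] (ρ σ : Matrix d d ℂ) : ℝ :=
  traceNorm (ρ - σ) / 2

/-- The coherence rank of a vector: the number of nonzero coordinates. -/
def cohRank {d : Type*} [Fintype d] (ψ : d → ℂ) : ℕ :=
  (Finset.univ.filter fun x => ψ x ≠ 0).card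

/-- The Hadamard gate. -/
def Hmat : Matrix (Fin 2) (Fin 2) ℂ :=
  Matrix.of fun a b => (((Real.sqrt 2)⁻¹ : ℝ) : ℂ) * (if a = 1 ∧ b = 1 then -1 else 1)

/-- `H^{⊗n}`, the n-fold Kronecker power of the Hadamard gate. -/
def Hpow (n : ℕ) : Matrix (Fin n → Fin 2) (Fin n → Fin 2) ℂ :=
  Matrix.of fun i j => ∏ q, Hmat (i q) (j q)

/-- A generalized controlled-Hadamard on qubits indexed by `I`: for some target qubit `t`
and set `S` of configurations of the other qubits, apply `H` on qubit `t` controlled on the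
other qubits being in `S`. -/
def IsCtrlHadamard {I : Type*} [Fintype I] [DecidableEq I]
    (V : Matrix (I → Fin 2) (I → Fin 2) ℂ) : Prop :=
  ∃ (t : I) (S : Finset ({i : I // i ≠ t} → Fin 2)),
    V = Matrix.of fun a b =>
      if (fun i : {i : I // i ≠ t} => b i.1) ∈ S then
        (if ∀ i, i ≠ t → a i = b i then Hmat (a t) (b t) else 0)
      else (if a = b then (1 : ℂ) else 0)

/-- The alternating product `U_k * V_k * ⋯ * U_1 * V_1 * U_0`. -/
def altProd {X : Type*} [Monoid X] : (k : ℕ) → (Fin (k + 1) → X) → (Fin k → X) → X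
  | 0, Us, _ => Us 0
  | (k + 1), Us, Vs =>
      Us (Fin.last (k + 1)) * Vs (Fin.last k) *
        altProd k (fun i => Us i.castSucc) (fun i => Vs i.castSucc)

/-- For an incoherent unitary `U` on a bipartite system and basis index `x`
of the second factor, the map `ρ ↦ Tr₂((1 ⊗ |x⟩⟨x|) U ρ U†)` commutes with dephasing. -/
theorem subchannel_incoherent_commutes_dephase
    (d₁ d₂ : ℕ) (U : Matrix (Fin d₁ × Fin d₂) (Fin d₁ × Fin d₂) ℂ)
    (hUni : U ∈ Matrix.unitaryGroup (Fin d₁ × Fin d₂) ℂ)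
    (hInc : IsIncoherent U) (x : Fin d₂)
    (ρ : Matrix (Fin d₁ × Fin d₂) (Fin d₁ × Fin d₂) ℂ) :
    ptrace2 (((1 : Matrix (Fin d₁) (Fin d₁) ℂ) ⊗ₖ Matrix.single x x (1 : ℂ)) *
        (U * dephase ρ * Uᴴ)) =
      dephase (ptrace2 (((1 : Matrix (Fin d₁) (Fin d₁) ℂ) ⊗ₖ Matrix.single x x (1 : ℂ)) *
        (U * ρ * Uᴴ))) := by
  obtain ⟨π, θ, hU⟩ := hInc
  have proj : ∀ (N : Matrix (Fin d₁ × Fin d₂) (Fin d₁ × Fin d₂) ℂ) (i i' : Fin d₁),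
      (∑ j, (((1 : Matrix (Fin d₁) (Fin d₁) ℂ) ⊗ₖ Matrix.single x x (1:ℂ)) * N)
        (i, j) (i', j)) = N (i, x) (i', x) := by
    intro N i i'
    simp [Matrix.mul_apply, Matrix.kroneckerMap_apply, Matrix.one_apply,
      Matrix.single, Fintype.sum_prod_type, ite_and]
  have key : ∀ (M : Matrix (Fin d₁ × Fin d₂) (Fin d₁ × Fin d₂) ℂ) p q,
      (U * M * Uᴴ) p q =
        Complex.exp ((θ (π.symm p) : ℂ) * Complex.I) * M (π.symm p) (π.symm q) *
          (starRingEnd ℂ) (Complex.exp ((θ (π.symm q) : ℂ) * Complex.I)) := by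
    intro M p q
    rw [hU]
    simp only [Matrix.mul_apply, Matrix.conjTranspose_apply, Matrix.of_apply]
    rw [Finset.sum_eq_single (π.symm q)]
    · rw [Finset.sum_eq_single (π.symm p)]
      · simp
      · intro b _ hb
        simp [eq_comm, Equiv.eq_symm_apply] at hb ⊢
        simp [hb]
      · simp
    · intro b _ hb
      rw [Finset.sum_eq_single (π.symm p)]
      · simp [eq_comm, Equiv.eq_symm_apply] at hb ⊢
        simp [hb]
      · intro c _ hc
        simp [eq_comm, Equiv.eq_symm_apply] at hc ⊢
        simp [hc]
      · simp
    · simp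
  ext i i'
  simp only [ptrace2, dephase, Matrix.of_apply]
  rw [proj, proj, key, key]
  by_cases h : i = i'
  · subst h
    simp
  · have hne : π.symm (i, x) ≠ π.symm (i', x) := fun hh =>
      h (by simpa [Prod.ext_iff] using π.symm.injective hh)
    simp [h, hne]
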